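/- arXiv:1809.09889 — 3 statements merged into one kernel-verified Lean document; each statement's English description precedes it below -/
import Mathlib

section
/- Let A be an h×h real matrix and B an h×h real matrix. Then for any t ≥ 0, the matrix exponential of the 2h×2h block upper triangular matrix [[A, B],[0, A]] times t has upper-right h×h block equal to ∫₀ᵗ exp(A v) B exp(A (t−v)) dv. -/
open NormedSpace

/-!
Put `M = [[A, B], [0, A]]` and `F(s) = [[exp (s A), X s], [0, exp (s A)]]` with
`X s = ∫₀ˢ exp (v A) B exp ((s - v) A) dv`. Then `F 0 = 1` and `F' = F M`, and in a Banach algebra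
this initial value problem has the unique solution `s ↦ exp (s M)`, because `F s * exp (-s M)` has
derivative zero. To differentiate `X`, factor it as `(∫₀ˢ exp (v A) B exp (-v A) dv) * exp (s A)`,
whose first factor is covered by the fundamental theorem of calculus.
-/

section BanachAlgebra

variable {𝔸 : Type*} [NormedRing 𝔸] [NormedAlgebra ℝ 𝔸] [NormedAlgebra ℚ 𝔸] [CompleteSpace 𝔸]

theorem exp_smul_neg_mul_exp_smul (s : ℝ) (a : 𝔸) : exp (s • -a) * exp (s • a) = 1 := by
  rw [← exp_add_of_commute (((Commute.refl a).neg_left.smul_left _).smul_right _), smul_neg,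
    neg_add_cancel, exp_zero]

theorem eq_exp_smul_of_hasDerivAt_mul {F : ℝ → 𝔸} {a : 𝔸}
    (hF : ∀ s, HasDerivAt F (F s * a) s) (h0 : F 0 = 1) (s : ℝ) : F s = exp (s • a) := by
  have hG (u : ℝ) : HasDerivAt (fun u => F u * exp (u • -a)) 0 u := by
    refine ((hF u).mul (hasDerivAt_exp_smul_const' (-a) u)).congr_deriv ?_
    simp [mul_assoc]
  have hG_eq_one : F s * exp (s • -a) = 1 := by
    simpa [h0] using is_const_of_deriv_eq_zero (fun u => (hG u).differentiableAt)
      (fun u => (hG u).deriv) s 0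
  rw [← one_mul (exp (s • a)), ← hG_eq_one, mul_assoc, exp_smul_neg_mul_exp_smul, mul_one]

theorem intervalIntegral_exp_smul_mul_mul_exp_sub_smul (a b : 𝔸) (s : ℝ) :
    ∫ v in 0..s, exp (v • a) * b * exp ((s - v) • a) =
      (∫ v in 0..s, exp (v • a) * b * exp (v • -a)) * exp (s • a) := by
  have hsplit (v : ℝ) : exp ((s - v) • a) = exp (v • -a) * exp (s • a) := by
    rw [← exp_add_of_commute (((Commute.refl a).neg_left.smul_left _).smul_right _)]
    congr 1
    module
  simp_rw [hsplit, ← mul_assoc]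
  exact ((ContinuousLinearMap.mul ℝ 𝔸).flip (exp (s • a))).intervalIntegral_comp_comm
    ((by fun_prop : Continuous fun v : ℝ => exp (v • a) * b * exp (v • -a)).intervalIntegrable 0 s)

theorem hasDerivAt_intervalIntegral_exp_smul_mul_mul_exp_sub_smul (a b : 𝔸) (s : ℝ) :
    HasDerivAt (fun s => ∫ v in 0..s, exp (v • a) * b * exp ((s - v) • a))
      (exp (s • a) * b + (∫ v in 0..s, exp (v • a) * b * exp ((s - v) • a)) * a) s := by
  simp_rw [intervalIntegral_exp_smul_mul_mul_exp_sub_smul]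
  have hW := ((by fun_prop : Continuous fun v : ℝ => exp (v • a) * b * exp (v • -a))
    |>.integral_hasStrictDerivAt 0 s).hasDerivAt
  refine (hW.mul (hasDerivAt_exp_smul_const a s)).congr_deriv ?_
  rw [mul_assoc (exp (s • a) * b), exp_smul_neg_mul_exp_smul, mul_one, mul_assoc]

end BanachAlgebra

namespace Matrix

section LinftyOp

/- The L∞ operator norm makes square matrices a Banach algebra. Integrals of matrices taken in this
section are therefore with respect to it, not the entrywise sup norm of the theorem; the two are
compared entry by entry at the end. -/
attribute [local instance] Matrix.linftyOpNormedAddCommGroup Matrix.linftyOpNormedSpace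
  Matrix.linftyOpNormedRing Matrix.linftyOpNormedAlgebra

theorem _root_.HasDerivAt.matrix_fromBlocks {𝕜 : Type*} [NontriviallyNormedField 𝕜]
    [CompleteSpace 𝕜] {l m n o : Type*} [Fintype l] [Fintype m] [Fintype n] [Fintype o]
    {P : 𝕜 → Matrix n l 𝕜} {Q : 𝕜 → Matrix n m 𝕜} {R : 𝕜 → Matrix o l 𝕜} {S : 𝕜 → Matrix o m 𝕜}
    {P' : Matrix n l 𝕜} {Q' : Matrix n m 𝕜} {R' : Matrix o l 𝕜} {S' : Matrix o m 𝕜} {s : 𝕜}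
    (hP : HasDerivAt P P' s) (hQ : HasDerivAt Q Q' s) (hR : HasDerivAt R R' s)
    (hS : HasDerivAt S S' s) :
    HasDerivAt (fun s => fromBlocks (P s) (Q s) (R s) (S s)) (fromBlocks P' Q' R' S') s := by
  let L : (Matrix n l 𝕜 × Matrix n m 𝕜) × (Matrix o l 𝕜 × Matrix o m 𝕜) →ₗ[𝕜]
      Matrix (n ⊕ o) (l ⊕ m) 𝕜 :=
    { toFun := fun X => fromBlocks X.1.1 X.1.2 X.2.1 X.2.2
      map_add' := fun X Y => (fromBlocks_add ..).symm
      map_smul' := fun c X => (fromBlocks_smul ..).symm }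
  exact L.toContinuousLinearMap.hasFDerivAt.comp_hasDerivAt s
    ((hP.prodMk hQ).prodMk (hR.prodMk hS))

variable {m : Type*} [Fintype m] [DecidableEq m]

theorem exp_smul_fromBlocks_zero₂₁_self (A B : Matrix m m ℝ) (t : ℝ) :
    exp (t • fromBlocks A B 0 A) =
      fromBlocks (exp (t • A)) (∫ v in 0..t, exp (v • A) * B * exp ((t - v) • A)) 0
        (exp (t • A)) := by
  let X : ℝ → Matrix m m ℝ := fun s => ∫ v in 0..s, exp (v • A) * B * exp ((s - v) • A)
  let F : ℝ → Matrix (m ⊕ m) (m ⊕ m) ℝ := fun s => fromBlocks (exp (s • A)) (X s) 0 (exp (s • A))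
  have hF (s : ℝ) : HasDerivAt F (F s * fromBlocks A B 0 A) s := by
    refine ((hasDerivAt_exp_smul_const A s).matrix_fromBlocks
      (hasDerivAt_intervalIntegral_exp_smul_mul_mul_exp_sub_smul A B s) (hasDerivAt_const s 0)
      (hasDerivAt_exp_smul_const A s)).congr_deriv ?_
    simp only [F, X, fromBlocks_multiply, mul_zero, zero_mul, add_zero, zero_add]
    -- the lemma's integrand multiplies through `NormedRing.toRing`; equal after unfolding
    rfl
  have hF0 : F 0 = 1 := by simp [F, X, fromBlocks_one]
  exact (eq_exp_smul_of_hasDerivAt_mul hF hF0 t).symm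

theorem continuous_exp_smul_mul_mul_exp_sub_smul (A B : Matrix m m ℝ) (t : ℝ) :
    Continuous fun v : ℝ => exp (v • A) * B * exp ((t - v) • A) := by
  fun_prop

theorem exp_smul_fromBlocks_zero₂₁_self_apply_inl_inr (A B : Matrix m m ℝ) (t : ℝ) (i j : m) :
    exp (t • fromBlocks A B 0 A) (.inl i) (.inr j) =
      ∫ v in 0..t, (exp (v • A) * B * exp ((t - v) • A)) i j := by
  rw [exp_smul_fromBlocks_zero₂₁_self, fromBlocks_apply₁₂]
  exact ((entryLinearMap ℝ ℝ i j).toContinuousLinearMap.intervalIntegral_comp_comm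
    ((continuous_exp_smul_mul_mul_exp_sub_smul A B t).intervalIntegrable 0 t)).symm

end LinftyOp

end Matrix

attribute [local instance] Matrix.normedAddCommGroup Matrix.normedSpace

theorem vanLoan_block_exp_general {h : ℕ} (A B : Matrix (Fin h) (Fin h) ℝ) (t : ℝ) :
    (exp (t • Matrix.fromBlocks A B 0 A)).toBlocks₁₂ =
      ∫ v in (0:ℝ)..t, exp (v • A) * B * exp ((t - v) • A) := by
  ext i j
  rw [Matrix.toBlocks₁₂, Matrix.of_apply, Matrix.exp_smul_fromBlocks_zero₂₁_self_apply_inl_inr]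
  exact (Matrix.entryLinearMap ℝ ℝ i j).toContinuousLinearMap.intervalIntegral_comp_comm
    ((Matrix.continuous_exp_smul_mul_mul_exp_sub_smul A B t).intervalIntegrable 0 t)

/-- Van Loan's formula: the upper-right block of the matrix exponential of the
block upper triangular matrix `[[A, B], [0, A]]` times `t` equals
`∫₀ᵗ exp(A v) B exp(A (t−v)) dv`. -/
theorem vanLoan_block_exp {h : ℕ} (A B : Matrix (Fin h) (Fin h) ℝ) (t : ℝ) (ht : 0 ≤ t) :
    (exp (t • Matrix.fromBlocks A B 0 A)).toBlocks₁₂ =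
      ∫ v in (0:ℝ)..t, exp (v • A) * B * exp ((t - v) • A) :=
  vanLoan_block_exp_general A B t
end

section
/- Let Q be a generator matrix and for an allowed pair (α,β) with α ≠ β define C = [[Q, E],[0, Q]] where E = e_α e_β^T − e_α e_α^T. Then the partial derivative of the (s,r) entry of exp(Qt) with respect to q_{αβ}, where the diagonal q_{αα} = −Σ_{j≠α} q_{αj} is constrained so that rows sum to zero, equals the (s, h+r) entry of exp(Ct). -/
/-!
For `u ≠ 0`, conjugating `diag(A, A + u • E)` by the unipotent block matrix `[[1, u⁻¹ • 1], [0, 1]]`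
gives `[[A, E], [0, A + u • E]]`. Hence the difference quotient `(exp (A + u • E) - exp A) / u`
is exactly the upper right block of `exp [[A, E], [0, A + u • E]]`. That block depends continuously
on `u`, so letting `u → 0` gives the derivative (Van Loan's block-matrix formula). The theorem is
the case `A = t • Q`, `E = t • (e_α e_βᵀ - e_α e_αᵀ)`, shifted to the point `q_{αβ}`.
-/

open NormedSpace

namespace Matrix

variable {m n 𝔸 : Type*} [Fintype m] [DecidableEq m] [Fintype n] [DecidableEq n]

section Ring

variable [Ring 𝔸]

def fromBlocksDiagonalRingHom : Matrix m m 𝔸 × Matrix n n 𝔸 →+* Matrix (m ⊕ n) (m ⊕ n) 𝔸 where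
  toFun p := fromBlocks p.1 0 0 p.2
  map_one' := fromBlocks_one
  map_mul' p q := by simp [fromBlocks_multiply]
  map_zero' := fromBlocks_zero
  map_add' p q := by simp [fromBlocks_add]

def fromBlocksUnipotent (X : Matrix m n 𝔸) : (Matrix (m ⊕ n) (m ⊕ n) 𝔸)ˣ where
  val := fromBlocks 1 X 0 1
  inv := fromBlocks 1 (-X) 0 1
  val_inv := by simp [fromBlocks_multiply, ← fromBlocks_one]
  inv_val := by simp [fromBlocks_multiply, ← fromBlocks_one]

theorem fromBlocksUnipotent_conj_fromBlocks_zero_zero (X : Matrix m n 𝔸) (A : Matrix m m 𝔸)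
    (B : Matrix n n 𝔸) :
    (fromBlocksUnipotent X : Matrix (m ⊕ n) (m ⊕ n) 𝔸) * fromBlocks A 0 0 B *
        (↑(fromBlocksUnipotent X)⁻¹ : Matrix (m ⊕ n) (m ⊕ n) 𝔸) =
      fromBlocks A (X * B - A * X) 0 B := by
  simp [fromBlocksUnipotent, fromBlocks_multiply, sub_eq_neg_add]

end Ring

section Normed

variable [NormedRing 𝔸] [NormedAlgebra ℚ 𝔸] [CompleteSpace 𝔸]

theorem exp_fromBlocks_zero_zero (A : Matrix m m 𝔸) (B : Matrix n n 𝔸) :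
    exp (fromBlocks A 0 0 B) = fromBlocks (exp A) 0 0 (exp B) := by
  have hcont : Continuous (fromBlocksDiagonalRingHom : Matrix m m 𝔸 × Matrix n n 𝔸 →+* _) :=
    continuous_fst.matrix_fromBlocks continuous_const continuous_const continuous_snd
  -- The uniform structure of the operator norm is not reducibly the entrywise one, so instance
  -- search does not see that these normed rings are complete.
  open scoped Norms.Operator in
  · have : @CompleteSpace (Matrix m m 𝔸) PseudoMetricSpace.toUniformSpace :=
      instCompleteSpace m m 𝔸
    have : @CompleteSpace (Matrix n n 𝔸) PseudoMetricSpace.toUniformSpace :=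
      instCompleteSpace n n 𝔸
    have : @CompleteSpace (Matrix m m 𝔸 × Matrix n n 𝔸) PseudoMetricSpace.toUniformSpace :=
      CompleteSpace.prod
    exact (map_exp _ hcont (A, B)).symm.trans
      (congrArg₂ (fromBlocks · 0 0 ·) (Prod.fst_exp (A, B)) (Prod.snd_exp (A, B)))

theorem continuous_exp : Continuous (exp : Matrix m m 𝔸 → Matrix m m 𝔸) := by
  open scoped Norms.Operator in
  · have : @CompleteSpace (Matrix m m 𝔸) PseudoMetricSpace.toUniformSpace :=
      instCompleteSpace m m 𝔸
    exact exp_continuous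

theorem exp_fromBlocks_mul_sub_mul (A : Matrix m m 𝔸) (B : Matrix n n 𝔸) (X : Matrix m n 𝔸) :
    exp (fromBlocks A (X * B - A * X) 0 B) =
      fromBlocks (exp A) (X * exp B - exp A * X) 0 (exp B) := by
  rw [← fromBlocksUnipotent_conj_fromBlocks_zero_zero, exp_units_conj, exp_fromBlocks_zero_zero,
    fromBlocksUnipotent_conj_fromBlocks_zero_zero]

end Normed

section Field

variable {𝕂 : Type*} [NontriviallyNormedField 𝕂] [NormedAlgebra ℚ 𝕂] [CompleteSpace 𝕂]

theorem inv_smul_sub_exp_eq_toBlocks₁₂_exp (A E : Matrix n n 𝕂) {u : 𝕂} (hu : u ≠ 0) :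
    u⁻¹ • (exp (A + u • E) - exp A) = (exp (fromBlocks A E 0 (A + u • E))).toBlocks₁₂ := by
  have hE : (u⁻¹ • 1 : Matrix n n 𝕂) * (A + u • E) - A * (u⁻¹ • 1) = E := by
    simp [smul_add, smul_smul, inv_mul_cancel₀ hu]
  have h := exp_fromBlocks_mul_sub_mul A (A + u • E) (u⁻¹ • 1)
  rw [hE] at h
  rw [h, toBlocks_fromBlocks₁₂]
  simp [smul_sub]

theorem hasDerivAt_exp_add_smul_apply (A E : Matrix n n 𝕂) (i j : n) :
    HasDerivAt (fun x : 𝕂 => exp (A + x • E) i j)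
      (exp (fromBlocks A E 0 A) (.inl i) (.inr j)) 0 := by
  rw [hasDerivAt_iff_tendsto_slope_zero]
  have hcont : Continuous fun u : 𝕂 => exp (fromBlocks A E 0 (A + u • E)) (.inl i) (.inr j) := by
    refine (continuous_exp.comp ?_).matrix_elem _ _
    exact continuous_const.matrix_fromBlocks continuous_const continuous_const
      (continuous_const.add (continuous_id.smul continuous_const))
  have hlim := (hcont.tendsto 0).mono_left (nhdsWithin_le_nhds (s := {0}ᶜ))
  simp only [zero_smul, add_zero] at hlim
  refine hlim.congr' (eventually_nhdsWithin_of_forall fun u hu => ?_)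
  have := congrFun₂ (inv_smul_sub_exp_eq_toBlocks₁₂_exp A E hu) i j
  simpa [toBlocks₁₂] using this.symm

end Field

end Matrix

theorem deriv_exp_entry_generator_constrained_general {h : ℕ} (Q : Matrix (Fin h) (Fin h) ℝ)
    (α β : Fin h) (t : ℝ) (s r : Fin h) :
    HasDerivAt
      (fun x : ℝ => (exp (t • (Q + (x - Q α β) •
        (Matrix.single α β (1:ℝ) - Matrix.single α α 1)))
          : Matrix (Fin h) (Fin h) ℝ) s r)
      ((exp (t • Matrix.fromBlocks Q
          (Matrix.single α β (1:ℝ) - Matrix.single α α 1) 0 Q)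
          : Matrix (Fin h ⊕ Fin h) (Fin h ⊕ Fin h) ℝ)
        (Sum.inl s) (Sum.inr r))
      (Q α β) := by
  set E : Matrix (Fin h) (Fin h) ℝ := Matrix.single α β 1 - Matrix.single α α 1
  have hshift (x : ℝ) : t • (Q + (x - Q α β) • E) = t • Q + (x - Q α β) • (t • E) := by
    rw [smul_add, smul_comm]
  simp only [hshift, Matrix.fromBlocks_smul, smul_zero]
  exact .comp_sub_const (Q α β) (Q α β) <| by
    simpa only [sub_self] using Matrix.hasDerivAt_exp_add_smul_apply (t • Q) (t • E) s r

/-- The partial derivative of the `(s,r)` entry of `exp(Q t)` with respect to the allowed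
off-diagonal entry `q_{αβ}` (with the diagonal compensating so that rows sum to zero, i.e.
`dQ/dq_{αβ} = e_α e_β^T − e_α e_α^T`) equals the `(s, h+r)` entry of `exp(C t)` where
`C = [[Q, e_α e_β^T − e_α e_α^T], [0, Q]]`. -/
theorem deriv_exp_entry_generator_constrained {h : ℕ} (Q : Matrix (Fin h) (Fin h) ℝ)
    (hoff : ∀ i j, i ≠ j → 0 ≤ Q i j) (hrow : ∀ i, ∑ j, Q i j = 0)
    (α β : Fin h) (hαβ : α ≠ β) (hpos : 0 < Q α β) (t : ℝ) (ht : 0 ≤ t) (s r : Fin h) :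
    HasDerivAt
      (fun x : ℝ => (exp (t • (Q + (x - Q α β) •
        (Matrix.single α β (1:ℝ) - Matrix.single α α 1)))
          : Matrix (Fin h) (Fin h) ℝ) s r)
      ((exp (t • Matrix.fromBlocks Q
          (Matrix.single α β (1:ℝ) - Matrix.single α α 1) 0 Q)
          : Matrix (Fin h ⊕ Fin h) (Fin h ⊕ Fin h) ℝ)
        (Sum.inl s) (Sum.inr r))
      (Q α β) :=
  deriv_exp_entry_generator_constrained_general Q α β t s r
end

section
/- Let f(q) = Σ_k N_k log g_k(q) where each g_k is a positive smooth function of the parameter vector q and N_k ≥ 0. Then the Hessian of f satisfies ∂²f/∂q_i∂q_j = Σ_k N_k [ (∂²g_k/∂q_i∂q_j)/g_k − (∂g_k/∂q_i)(∂g_k/∂q_j)/g_k² ]. In particular, for the discretely observed CTMC likelihood with g = matrix exponential entries, the Hessian of the log-likelihood at (α,β),(μ,ν) equals Σ_{u,s,r} (N_{sr}(u)/(exp(QΔt_u))_{sr}) [ (exp(C_ξ Δt_u))_{s,3h+r} − (exp(C^{(αβ)}Δt_u))_{s,h+r}(exp(C^{(μν)}Δt_u))_{s,h+r}/(exp(QΔt_u))_{sr}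 ], where C_ξ = [[C^{(αβ)}, ∂C^{(αβ)}/∂q_{μν}],[0, C^{(αβ)}]]. -/
open NormedSpace Matrix Finset Nat

namespace CTMCAux

variable {n : Type*} [Fintype n] [DecidableEq n]

theorem sum_shift {R : Type*} [Ring R] (X B : R) (k : ℕ) :
    (∑ l ∈ range k, X ^ l * B * X ^ (k - 1 - l)) * X + X ^ k * B
      = ∑ l ∈ range (k + 1), X ^ l * B * X ^ (k - l) := by
  rw [Finset.sum_range_succ, Finset.sum_mul]
  congr 1
  · refine Finset.sum_congr rfl fun l hl => ?_
    rw [Finset.mem_range] at hl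
    rw [mul_assoc, ← pow_succ]
    congr 2
    omega
  · simp

theorem fromBlocks_pow (X B : Matrix n n ℝ) (k : ℕ) :
    (fromBlocks X B 0 X) ^ k =
      fromBlocks (X ^ k) (∑ l ∈ range k, X ^ l * B * X ^ (k - 1 - l)) 0 (X ^ k) := by
  induction k with
  | zero => simp [Matrix.fromBlocks_one]
  | succ k ih =>
      rw [pow_succ, ih, Matrix.fromBlocks_multiply]
      have h2 : ∀ l, k + 1 - 1 - l = k - l := fun l => by omega
      simp only [h2]
      rw [← sum_shift]
      congr 1 <;> simp [pow_succ, add_comm]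

theorem entry_abs_le (M : Matrix n n ℝ) (i j : n) :
    letI : SeminormedRing (Matrix n n ℝ) := Matrix.linftyOpSemiNormedRing
    |M i j| ≤ ‖M‖ := by
  letI : SeminormedRing (Matrix n n ℝ) := Matrix.linftyOpSemiNormedRing
  rw [Matrix.linfty_opNorm_def]
  calc |M i j| ≤ ∑ j', ‖M i j'‖ :=
        Finset.single_le_sum (fun j' _ => norm_nonneg (M i j')) (Finset.mem_univ j)
    _ ≤ _ := by
        have := Finset.le_sup (f := fun i => ∑ j', ‖M i j'‖₊) (Finset.mem_univ i)
        have h2 : ((∑ j', ‖M i j'‖₊ : NNReal) : ℝ) ≤ ((Finset.univ.sup fun i => ∑ j', ‖M i j'‖₊ : NNReal) : ℝ) := by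
          exact_mod_cast this
        simpa using h2

theorem norm_one_le' :
    letI : SeminormedRing (Matrix n n ℝ) := Matrix.linftyOpSemiNormedRing
    ‖(1 : Matrix n n ℝ)‖ ≤ 1 := by
  letI : SeminormedRing (Matrix n n ℝ) := Matrix.linftyOpSemiNormedRing
  rw [← Matrix.diagonal_one, Matrix.linfty_opNorm_diagonal]
  refine (pi_norm_le_iff_of_nonneg zero_le_one).mpr fun i => by simp

theorem pow_norm_le (M : Matrix n n ℝ) {C : ℝ}
    (hC : letI : SeminormedRing (Matrix n n ℝ) := Matrix.linftyOpSemiNormedRing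
      ‖M‖ ≤ C) (hC1 : 1 ≤ C) (l : ℕ) :
    letI : SeminormedRing (Matrix n n ℝ) := Matrix.linftyOpSemiNormedRing
    ‖M ^ l‖ ≤ C ^ l := by
  letI : SeminormedRing (Matrix n n ℝ) := Matrix.linftyOpSemiNormedRing
  induction l with
  | zero =>
      have h1 := norm_one_le' (n := n)
      simpa using h1
  | succ l ih =>
      rw [pow_succ, pow_succ]
      calc ‖M ^ l * M‖ ≤ ‖M ^ l‖ * ‖M‖ := norm_mul_le _ _
        _ ≤ C ^ l * C :=
            mul_le_mul ih hC (norm_nonneg _) (pow_nonneg (by linarith) l)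

theorem summable_entry (A : Matrix n n ℝ) (i j : n) :
    Summable (fun k : ℕ => ((k ! : ℝ)⁻¹ • A ^ k) i j) := by
  letI : SeminormedRing (Matrix n n ℝ) := Matrix.linftyOpSemiNormedRing
  set C : ℝ := 1 + ‖A‖ with hC
  have hC1 : (1:ℝ) ≤ C := by have := norm_nonneg A; simp only [hC]; linarith
  have hAC : ‖A‖ ≤ C := by simp [hC]
  refine Summable.of_norm_bounded (g := fun k => C ^ k / k !)
    (Real.summable_pow_div_factorial C) fun k => ?_
  have h1 : |((k ! : ℝ)⁻¹ • A ^ k) i j| = (k ! : ℝ)⁻¹ * |(A ^ k) i j| := by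
    rw [Matrix.smul_apply, smul_eq_mul, abs_mul,
      abs_of_nonneg (by positivity : (0:ℝ) ≤ ((k ! : ℝ))⁻¹)]
  show |((k ! : ℝ)⁻¹ • A ^ k) i j| ≤ C ^ k / (k ! : ℝ)
  rw [h1, div_eq_inv_mul]
  exact mul_le_mul_of_nonneg_left ((entry_abs_le _ i j).trans (pow_norm_le A hAC hC1 k))
    (inv_nonneg.mpr (Nat.cast_nonneg _))

theorem matExp_summable (A : Matrix n n ℝ) :
    Summable (fun k : ℕ => (k ! : ℝ)⁻¹ • A ^ k) := by
  apply Pi.summable.mpr; intro i; apply Pi.summable.mpr; intro j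
  exact summable_entry A i j

theorem matExp_apply (A : Matrix n n ℝ) (i j : n) :
    exp A i j = ∑' k : ℕ, ((k ! : ℝ)⁻¹ • A ^ k) i j := by
  have h0 : exp A = ∑' k : ℕ, (k ! : ℝ)⁻¹ • A ^ k := by
    rw [exp_eq_tsum ℝ]
  rw [h0]; erw [tsum_apply (matExp_summable A), tsum_apply (Pi.summable.mp (matExp_summable A) i)]

theorem exp_fromBlocks_entry (A B : Matrix n n ℝ) (i j : n) :
    exp (fromBlocks A B 0 A) (Sum.inl i) (Sum.inr j)
      = ∑' k : ℕ, (k ! : ℝ)⁻¹ * ((∑ l ∈ range k, A ^ l * B * A ^ (k - 1 - l)) i j) := by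
  have hp : ∀ k : ℕ, (fromBlocks A B 0 A) ^ k =
      fromBlocks (A ^ k) (∑ l ∈ range k, A ^ l * B * A ^ (k - 1 - l)) 0 (A ^ k) :=
    fromBlocks_pow A B
  rw [matExp_apply]
  congr 1; funext k
  rw [hp k]
  simp [Matrix.smul_apply, Matrix.fromBlocks_apply₁₂]

theorem hasDerivAt_entry_pow (A B : Matrix n n ℝ) (k : ℕ) (t : ℝ) (i j : n) :
    HasDerivAt (fun t : ℝ => ((A + t • B) ^ k) i j)
      ((∑ l ∈ range k, (A + t • B) ^ l * B * (A + t • B) ^ (k - 1 - l)) i j) t := by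
  induction k generalizing i j with
  | zero =>
      simp only [pow_zero, range_zero, sum_empty, Matrix.zero_apply]
      exact hasDerivAt_const t _
  | succ k ih =>
      have hmul : ∀ s : ℝ, ((A + s • B) ^ (k + 1)) i j
          = ∑ l, ((A + s • B) ^ k) i l * (A + s • B) l j := by
        intro s; rw [pow_succ, Matrix.mul_apply]
      have hentry : ∀ (l : n) (s : ℝ), HasDerivAt (fun s : ℝ => (A + s • B) l j) (B l j) s := by
        intro l s
        have h : ∀ s : ℝ, (A + s • B) l j = A l j + s * B l j := by
          intro s; simp [Matrix.add_apply, Matrix.smul_apply, smul_eq_mul]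
        simp only [h]
        simpa using ((hasDerivAt_id s).mul_const (B l j)).const_add (A l j)
      have h := HasDerivAt.fun_sum (u := Finset.univ)
        (fun l _ => (ih i l).mul (hentry l t))
      have hfun : (fun s : ℝ => ((A + s • B) ^ (k + 1)) i j)
          = fun s : ℝ => ∑ l, ((A + s • B) ^ k) i l * (A + s • B) l j := funext hmul
      rw [hfun]
      refine HasDerivAt.congr_deriv h ?_
      have hk : ∀ l : ℕ, k + 1 - 1 - l = k - l := fun l => by omega
      simp only [hk]
      rw [← sum_shift, Matrix.add_apply, Matrix.mul_apply, Matrix.mul_apply,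
        ← Finset.sum_add_distrib]

theorem hasDerivAt_exp_entry (A B : Matrix n n ℝ) (i j : n) :
    HasDerivAt (fun t : ℝ => exp (A + t • B) i j)
      (exp (fromBlocks A B 0 A) (Sum.inl i) (Sum.inr j)) 0 := by
  letI : SeminormedRing (Matrix n n ℝ) := Matrix.linftyOpSemiNormedRing
  letI : NormSMulClass ℝ (Matrix n n ℝ) := Matrix.linftyOpNormSMulClass
  set C : ℝ := 1 + ‖A‖ + ‖B‖ with hCdef
  have hB0 : (0:ℝ) ≤ ‖B‖ := norm_nonneg B
  have hA0 : (0:ℝ) ≤ ‖A‖ := norm_nonneg A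
  have hC1 : (1:ℝ) ≤ C := by rw [hCdef]; linarith
  have hC0 : (0:ℝ) ≤ C := by linarith
  set u : ℕ → ℝ := fun k => (k ! : ℝ)⁻¹ * (k * (‖B‖ * C ^ (k - 1))) with hu_def
  have hu : Summable u := by
    rw [← summable_nat_add_iff 1]
    have h : (fun k => u (k + 1)) = fun k => ‖B‖ * (C ^ k / k !) := by
      funext k
      have hfac : (((k + 1)! : ℕ) : ℝ) = ((k:ℝ) + 1) * (k ! : ℝ) := by
        rw [Nat.factorial_succ]; push_cast; ring
      have hk0 : ((k:ℝ) + 1) ≠ 0 := by positivity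
      have hf0 : ((k ! : ℕ) : ℝ) ≠ 0 := by
        exact_mod_cast Nat.factorial_ne_zero k
      rw [hu_def]
      simp only [Nat.add_sub_cancel, Nat.cast_add, Nat.cast_one]
      rw [hfac]
      field_simp
    rw [h]
    exact (Real.summable_pow_div_factorial C).mul_left ‖B‖
  have hg : ∀ (k : ℕ) (t : ℝ), t ∈ Metric.ball (0:ℝ) 1 →
      HasDerivAt (fun t => (k ! : ℝ)⁻¹ * (((A + t • B) ^ k) i j))
        ((k ! : ℝ)⁻¹ * ((∑ l ∈ range k, (A + t • B) ^ l * B * (A + t • B) ^ (k - 1 - l)) i j))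
        t :=
    fun k t _ => (hasDerivAt_entry_pow A B k t i j).const_mul _
  have hbound : ∀ (k : ℕ) (t : ℝ), t ∈ Metric.ball (0:ℝ) 1 →
      ‖(k ! : ℝ)⁻¹ * ((∑ l ∈ range k, (A + t • B) ^ l * B * (A + t • B) ^ (k - 1 - l)) i j)‖
        ≤ u k := by
    intro k t ht
    have habs : |t| ≤ 1 := by
      rw [Metric.mem_ball, Real.dist_eq, sub_zero] at ht; linarith
    have hX : ‖A + t • B‖ ≤ C := by
      calc ‖A + t • B‖ ≤ ‖A‖ + ‖t • B‖ := norm_add_le _ _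
        _ ≤ ‖A‖ + 1 * ‖B‖ := by
            rw [norm_smul, Real.norm_eq_abs]
            gcongr
        _ ≤ C := by rw [hCdef]; linarith
    have hterm : ∀ l ∈ range k,
        |((A + t • B) ^ l * B * (A + t • B) ^ (k - 1 - l)) i j| ≤ ‖B‖ * C ^ (k - 1) := by
      intro l hl
      rw [Finset.mem_range] at hl
      calc |((A + t • B) ^ l * B * (A + t • B) ^ (k - 1 - l)) i j|
          ≤ ‖(A + t • B) ^ l * B * (A + t • B) ^ (k - 1 - l)‖ := entry_abs_le _ i j
        _ ≤ ‖(A + t • B) ^ l‖ * ‖B‖ * ‖(A + t • B) ^ (k - 1 - l)‖ := by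
            refine (norm_mul_le _ _).trans ?_
            gcongr
            exact norm_mul_le _ _
        _ ≤ C ^ l * ‖B‖ * C ^ (k - 1 - l) := by
            have h1 := pow_norm_le (A + t • B) hX hC1 l
            have h2 := pow_norm_le (A + t • B) hX hC1 (k - 1 - l)
            exact mul_le_mul (mul_le_mul h1 le_rfl hB0 (pow_nonneg hC0 l)) h2
              (norm_nonneg _) (by positivity)
        _ = ‖B‖ * C ^ (k - 1) := by
            rw [mul_comm (C ^ l) ‖B‖, mul_assoc, ← pow_add]
            congr 2
            omega
    have hsum : |(∑ l ∈ range k, (A + t • B) ^ l * B * (A + t • B) ^ (k - 1 - l)) i j|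
        ≤ k * (‖B‖ * C ^ (k - 1)) := by
      rw [Matrix.sum_apply]
      calc |∑ l ∈ range k, ((A + t • B) ^ l * B * (A + t • B) ^ (k - 1 - l)) i j|
          ≤ ∑ l ∈ range k, |((A + t • B) ^ l * B * (A + t • B) ^ (k - 1 - l)) i j| :=
            Finset.abs_sum_le_sum_abs _ _
        _ ≤ ∑ _l ∈ range k, ‖B‖ * C ^ (k - 1) := Finset.sum_le_sum hterm
        _ = k * (‖B‖ * C ^ (k - 1)) := by
            rw [Finset.sum_const, Finset.card_range, nsmul_eq_mul]
    rw [Real.norm_eq_abs, abs_mul, abs_of_nonneg (by positivity : (0:ℝ) ≤ ((k ! : ℝ))⁻¹),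
      hu_def]
    exact mul_le_mul_of_nonneg_left hsum (by positivity)
  have hg0 : Summable (fun k : ℕ => (k ! : ℝ)⁻¹ * (((A + (0:ℝ) • B) ^ k) i j)) := by
    have h := summable_entry A i j
    have heq : (fun k : ℕ => (k ! : ℝ)⁻¹ * (((A + (0:ℝ) • B) ^ k) i j))
        = fun k : ℕ => ((k ! : ℝ)⁻¹ • A ^ k) i j := by
      funext k; simp [Matrix.smul_apply, smul_eq_mul]
    rw [heq]; exact h
  have H := hasDerivAt_tsum_of_isPreconnected hu Metric.isOpen_ball
    (convex_ball (0:ℝ) 1).isPreconnected hg hbound (Metric.mem_ball_self one_pos) hg0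
    (Metric.mem_ball_self one_pos)
  have hfun : (fun t : ℝ => ∑' k : ℕ, (k ! : ℝ)⁻¹ * (((A + t • B) ^ k) i j))
      = fun t : ℝ => exp (A + t • B) i j := by
    funext t; rw [matExp_apply]
    exact tsum_congr fun k => by simp [Matrix.smul_apply, smul_eq_mul]
  have hval : (∑' k : ℕ, (k ! : ℝ)⁻¹ *
        ((∑ l ∈ range k, (A + (0:ℝ) • B) ^ l * B * (A + (0:ℝ) • B) ^ (k - 1 - l)) i j))
      = exp (fromBlocks A B 0 A) (Sum.inl i) (Sum.inr j) := by
    rw [exp_fromBlocks_entry]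
    exact tsum_congr fun k => by simp
  rw [hfun, hval] at H
  exact H

theorem hasDerivAt_exp_entry' (A B : Matrix n n ℝ) (i j : n) (c : ℝ) :
    HasDerivAt (fun t : ℝ => exp (A + (t - c) • B) i j)
      (exp (fromBlocks A B 0 A) (Sum.inl i) (Sum.inr j)) c := by
  have h1 : HasDerivAt (fun t : ℝ => t - c) 1 c := (hasDerivAt_id c).sub_const c
  have hkey := hasDerivAt_exp_entry A B i j
  rw [show (0:ℝ) = c - c by ring] at hkey
  have h2 := HasDerivAt.comp (h := fun t : ℝ => t - c)
    (h₂ := fun t : ℝ => exp (A + t • B) i j) (x := c) hkey h1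
  rw [mul_one] at h2
  exact h2

theorem exp_submatrix {l : Type*} [Fintype l] [DecidableEq l]
    (e : l ≃ n) (A : Matrix n n ℝ) :
    exp (A.submatrix e e) = (exp A).submatrix e e := by
  letI : SeminormedRing (Matrix n n ℝ) := Matrix.linftyOpSemiNormedRing
  letI : NormedRing (Matrix n n ℝ) := Matrix.linftyOpNormedRing
  letI : NormedAlgebra ℝ (Matrix n n ℝ) := Matrix.linftyOpNormedAlgebra
  letI : NormedAlgebra ℚ (Matrix n n ℝ) := NormedAlgebra.restrictScalars ℚ ℝ (Matrix n n ℝ)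
  letI : SeminormedRing (Matrix l l ℝ) := Matrix.linftyOpSemiNormedRing
  letI : NormedRing (Matrix l l ℝ) := Matrix.linftyOpNormedRing
  letI : NormedAlgebra ℝ (Matrix l l ℝ) := Matrix.linftyOpNormedAlgebra
  have hcont : Continuous (fun M : Matrix n n ℝ => M.submatrix e e) := by
    apply continuous_pi; intro i; apply continuous_pi; intro j
    exact (continuous_apply (e j)).comp (continuous_apply (e i))
  have h := map_exp (Matrix.reindexAlgEquiv ℝ ℝ e.symm : Matrix n n ℝ ≃ₐ[ℝ] Matrix l l ℝ)
    (by exact hcont) A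
  exact h.symm

/-- the permutation swapping the two middle blocks -/
def swapMid : ((n ⊕ n) ⊕ (n ⊕ n)) ≃ ((n ⊕ n) ⊕ (n ⊕ n)) where
  toFun x := match x with
    | .inl (.inl s) => .inl (.inl s)
    | .inl (.inr s) => .inr (.inl s)
    | .inr (.inl s) => .inl (.inr s)
    | .inr (.inr s) => .inr (.inr s)
  invFun x := match x with
    | .inl (.inl s) => .inl (.inl s)
    | .inl (.inr s) => .inr (.inl s)
    | .inr (.inl s) => .inl (.inr s)
    | .inr (.inr s) => .inr (.inr s)
  left_inv x := by rcases x with (s | s) | (s | s) <;> rfl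
  right_inv x := by rcases x with (s | s) | (s | s) <;> rfl

theorem swap_submatrix (Q E1 E2 : Matrix n n ℝ) :
    (Matrix.fromBlocks (Matrix.fromBlocks Q E1 0 Q) (Matrix.fromBlocks E2 0 0 E2) 0
        (Matrix.fromBlocks Q E1 0 Q)).submatrix (swapMid (n := n)) (swapMid (n := n))
      = Matrix.fromBlocks (Matrix.fromBlocks Q E2 0 Q) (Matrix.fromBlocks E1 0 0 E1) 0
        (Matrix.fromBlocks Q E2 0 Q) := by
  ext x y
  rcases x with (s | s) | (s | s) <;> rcases y with (r | r) | (r | r) <;>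
    simp [swapMid, Matrix.submatrix_apply, Matrix.fromBlocks_apply₁₁,
      Matrix.fromBlocks_apply₁₂, Matrix.fromBlocks_apply₂₁, Matrix.fromBlocks_apply₂₂]

theorem exp_entry_swap (Q E1 E2 : Matrix n n ℝ) (c : ℝ) (s r : n) :
    exp (c • Matrix.fromBlocks (Matrix.fromBlocks Q E2 0 Q) (Matrix.fromBlocks E1 0 0 E1) 0
        (Matrix.fromBlocks Q E2 0 Q)) (Sum.inl (Sum.inl s)) (Sum.inr (Sum.inr r))
      = exp (c • Matrix.fromBlocks (Matrix.fromBlocks Q E1 0 Q)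
          (Matrix.fromBlocks E2 0 0 E2) 0 (Matrix.fromBlocks Q E1 0 Q))
        (Sum.inl (Sum.inl s)) (Sum.inr (Sum.inr r)) := by
  have h1 : c • Matrix.fromBlocks (Matrix.fromBlocks Q E2 0 Q) (Matrix.fromBlocks E1 0 0 E1) 0
      (Matrix.fromBlocks Q E2 0 Q)
      = ((c • Matrix.fromBlocks (Matrix.fromBlocks Q E1 0 Q) (Matrix.fromBlocks E2 0 0 E2) 0
        (Matrix.fromBlocks Q E1 0 Q)).submatrix (swapMid (n := n)) (swapMid (n := n))) := by
    rw [← swap_submatrix Q E1 E2]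
    ext x y
    simp [Matrix.submatrix_apply]
  rw [h1, exp_submatrix, Matrix.submatrix_apply]
  rfl

theorem smul_fromBlocks' (X Y : Matrix n n ℝ) (c : ℝ) :
    fromBlocks (c • X) (c • Y) 0 (c • X) = c • fromBlocks X Y 0 X := by
  rw [Matrix.fromBlocks_smul, smul_zero]

theorem part1 {d : ℕ} {ι : Type*} [Fintype ι]
    (Ng : ι → ℝ) (g : ι → (Fin d → ℝ) → ℝ) (hg : ∀ k, ContDiff ℝ (⊤ : ℕ∞) (g k))
    (hgpos : ∀ k q, 0 < g k q) (q : Fin d → ℝ) (i j : Fin d) :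
    fderiv ℝ (fun p => fderiv ℝ (fun p' => ∑ k, Ng k * Real.log (g k p')) p
        (Pi.single j 1)) q (Pi.single i 1)
      = ∑ k, Ng k *
          ((fderiv ℝ (fun p => fderiv ℝ (g k) p (Pi.single j 1)) q (Pi.single i 1)) / g k q
            - (fderiv ℝ (g k) q (Pi.single i 1)) * (fderiv ℝ (g k) q (Pi.single j 1))
                / (g k q) ^ 2) := by
  have hdiffg : ∀ k p, HasFDerivAt (g k) (fderiv ℝ (g k) p) p := fun k p =>
    (((hg k).differentiable (by simp)) p).hasFDerivAt
  have step1 : ∀ p, fderiv ℝ (fun p' => ∑ k, Ng k * Real.log (g k p')) p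
      = ∑ k, Ng k • ((g k p)⁻¹ • fderiv ℝ (g k) p) := by
    intro p
    have hterm : ∀ k ∈ Finset.univ, HasFDerivAt (fun p' => Ng k * Real.log (g k p'))
        (Ng k • ((g k p)⁻¹ • fderiv ℝ (g k) p)) p := fun k _ =>
      ((hdiffg k p).log (ne_of_gt (hgpos k p))).const_mul (Ng k)
    exact (HasFDerivAt.fun_sum hterm).fderiv
  have hfun : (fun p => fderiv ℝ (fun p' => ∑ k, Ng k * Real.log (g k p')) p (Pi.single j 1))
      = fun p => ∑ k, Ng k * ((g k p)⁻¹ *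
          fderiv ℝ (g k) p (Pi.single j 1)) := by
    funext p
    rw [step1 p]
    simp [ContinuousLinearMap.sum_apply, smul_eq_mul]
  rw [hfun]
  have hDjdiff : ∀ k, Differentiable ℝ (fun p => fderiv ℝ (g k) p (Pi.single j 1)) := by
    intro k
    have h1 : ContDiff ℝ (⊤ : ℕ∞) (fun p => fderiv ℝ (g k) p) := (hg k).fderiv_right (by simp)
    exact (h1.clm_apply contDiff_const).differentiable (by simp)
  have hterm : ∀ k ∈ Finset.univ, HasFDerivAt
      (fun p => Ng k * ((g k p)⁻¹ * fderiv ℝ (g k) p (Pi.single j 1)))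
      (Ng k • ((g k q)⁻¹ • fderiv ℝ (fun p => fderiv ℝ (g k) p (Pi.single j 1)) q
        + (fderiv ℝ (g k) q (Pi.single j 1)) • (-((g k q) ^ 2)⁻¹ • fderiv ℝ (g k) q))) q := by
    intro k _
    have hinv : HasFDerivAt (fun p => (g k p)⁻¹)
        (-((g k q) ^ 2)⁻¹ • fderiv ℝ (g k) q) q := by
      have h := (hasDerivAt_inv (ne_of_gt (hgpos k q))).comp_hasFDerivAt q (hdiffg k q)
      exact h
    have hDj : HasFDerivAt (fun p => fderiv ℝ (g k) p (Pi.single j 1))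
        (fderiv ℝ (fun p => fderiv ℝ (g k) p (Pi.single j 1)) q) q :=
      (hDjdiff k q).hasFDerivAt
    exact (hinv.mul hDj).const_mul (Ng k)
  rw [(HasFDerivAt.fun_sum hterm).fderiv]
  rw [ContinuousLinearMap.sum_apply]
  refine Finset.sum_congr rfl fun k _ => ?_
  have hgne : g k q ≠ 0 := ne_of_gt (hgpos k q)
  simp only [ContinuousLinearMap.smul_apply, ContinuousLinearMap.add_apply,
    ContinuousLinearMap.neg_apply, smul_eq_mul]
  field_simp
  ring

end CTMCAux

open CTMCAux

/-- Hessian of a log-likelihood of the form `f(q) = Σ_k N_k log g_k(q)` with `g_k` positive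
and smooth: `∂²f/∂q_i∂q_j = Σ_k N_k [ (∂²g_k/∂q_i∂q_j)/g_k − (∂g_k/∂q_i)(∂g_k/∂q_j)/g_k² ]`.
In particular, for the discretely observed CTMC log-likelihood it equals
`Σ_{u,s,r} (N_{sr}(u)/(exp(QΔt_u))_{sr}) [ (exp(C_ξ Δt_u))_{s,3h+r}
  − (exp(C^{(αβ)}Δt_u))_{s,h+r}(exp(C^{(μν)}Δt_u))_{s,h+r}/(exp(QΔt_u))_{sr} ]`,
where `C^{(αβ)} = [[Q, e_α e_β^T − e_α e_α^T],[0, Q]]` and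
`C_ξ = [[C^{(αβ)}, ∂C^{(αβ)}/∂q_{μν}],[0, C^{(αβ)}]]`. -/
theorem hessian_logLikelihood {d : ℕ} {ι : Type*} [Fintype ι]
    (Ng : ι → ℝ) (hNg : ∀ k, 0 ≤ Ng k)
    (g : ι → (Fin d → ℝ) → ℝ) (hg : ∀ k, ContDiff ℝ (⊤ : ℕ∞) (g k)) (hgpos : ∀ k q, 0 < g k q)
    (q : Fin d → ℝ) (i j : Fin d)
    {h M : ℕ} (Q : Matrix (Fin h) (Fin h) ℝ)
    (hoff : ∀ a b, a ≠ b → 0 ≤ Q a b) (hrow : ∀ a, ∑ b, Q a b = 0)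
    (α β μ ν : Fin h) (hαβ : α ≠ β) (hμν : μ ≠ ν) (hpαβ : 0 < Q α β) (hpμν : 0 < Q μ ν)
    (N : Fin M → Fin h → Fin h → ℕ) (Δt : Fin M → ℝ) (hΔt : ∀ u, 0 < Δt u)
    (hexp : ∀ u s r, 0 < N u s r →
      0 < (exp (Δt u • Q) : Matrix (Fin h) (Fin h) ℝ) s r)
    (E1 E2 : Matrix (Fin h) (Fin h) ℝ)
    (hE1 : E1 = Matrix.single α β (1:ℝ) - Matrix.single α α 1)
    (hE2 : E2 = Matrix.single μ ν (1:ℝ) - Matrix.single μ μ 1) :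
    (fderiv ℝ (fun p => fderiv ℝ (fun p' => ∑ k, Ng k * Real.log (g k p')) p
        (Pi.single j 1)) q (Pi.single i 1)
      = ∑ k, Ng k *
          ((fderiv ℝ (fun p => fderiv ℝ (g k) p (Pi.single j 1)) q (Pi.single i 1)) / g k q
            - (fderiv ℝ (g k) q (Pi.single i 1)) * (fderiv ℝ (g k) q (Pi.single j 1))
                / (g k q) ^ 2)) ∧
    deriv (fun x : ℝ => deriv (fun y : ℝ => ∑ u, ∑ s, ∑ r, (N u s r : ℝ) *
        Real.log ((exp (Δt u • (Q + (x - Q α β) • E1 + (y - Q μ ν) • E2))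
          : Matrix (Fin h) (Fin h) ℝ) s r)) (Q μ ν)) (Q α β)
      = ∑ u, ∑ s, ∑ r,
          ((N u s r : ℝ) / (exp (Δt u • Q) : Matrix (Fin h) (Fin h) ℝ) s r) *
          ((exp (Δt u • Matrix.fromBlocks (Matrix.fromBlocks Q E1 0 Q)
              (Matrix.fromBlocks E2 0 0 E2) 0 (Matrix.fromBlocks Q E1 0 Q))
            : Matrix ((Fin h ⊕ Fin h) ⊕ (Fin h ⊕ Fin h))
                ((Fin h ⊕ Fin h) ⊕ (Fin h ⊕ Fin h)) ℝ)
              (Sum.inl (Sum.inl s)) (Sum.inr (Sum.inr r))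
          - (exp (Δt u • Matrix.fromBlocks Q E1 0 Q)
              : Matrix (Fin h ⊕ Fin h) (Fin h ⊕ Fin h) ℝ) (Sum.inl s) (Sum.inr r)
            * (exp (Δt u • Matrix.fromBlocks Q E2 0 Q)
              : Matrix (Fin h ⊕ Fin h) (Fin h ⊕ Fin h) ℝ) (Sum.inl s) (Sum.inr r)
            / (exp (Δt u • Q) : Matrix (Fin h) (Fin h) ℝ) s r) := by
  refine ⟨part1 Ng g hg hgpos q i j, ?_⟩
  -- Part 2
  -- the set of parameters where all relevant entries of the exponential are positive
  set U : Set ℝ := {x | ∀ u s r, 0 < N u s r →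
    0 < (exp (Δt u • (Q + (x - Q α β) • E1)) : Matrix (Fin h) (Fin h) ℝ) s r} with hU_def
  have hcont : ∀ (u : Fin M) (s r : Fin h), Continuous fun x : ℝ =>
      (exp (Δt u • (Q + (x - Q α β) • E1)) : Matrix (Fin h) (Fin h) ℝ) s r := by
    intro u s r
    letI : SeminormedRing (Matrix (Fin h) (Fin h) ℝ) := Matrix.linftyOpSemiNormedRing
    letI : NormedRing (Matrix (Fin h) (Fin h) ℝ) := Matrix.linftyOpNormedRing
    letI : NormedAlgebra ℝ (Matrix (Fin h) (Fin h) ℝ) := Matrix.linftyOpNormedAlgebra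
    letI : NormedAlgebra ℚ (Matrix (Fin h) (Fin h) ℝ) :=
      NormedAlgebra.restrictScalars ℚ ℝ (Matrix (Fin h) (Fin h) ℝ)
    have h1 : Continuous fun x : ℝ => Δt u • (Q + (x - Q α β) • E1) := by
      refine Continuous.const_smul ?_ (Δt u)
      exact continuous_const.add ((continuous_id.sub continuous_const).smul continuous_const)
    have h2 : Continuous (exp : Matrix (Fin h) (Fin h) ℝ → Matrix (Fin h) (Fin h) ℝ) :=
      exp_continuous
    exact ((continuous_apply r).comp (continuous_apply s)).comp (h2.comp h1)
  have hUopen : IsOpen U := by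
    have hrepr : U = ⋂ u, ⋂ s, ⋂ r, {x : ℝ | 0 < N u s r →
        0 < (exp (Δt u • (Q + (x - Q α β) • E1)) : Matrix (Fin h) (Fin h) ℝ) s r} := by
      ext x; simp [hU_def, Set.mem_iInter, Set.mem_setOf_eq]
    rw [hrepr]
    refine isOpen_iInter_of_finite fun u => isOpen_iInter_of_finite fun s =>
      isOpen_iInter_of_finite fun r => ?_
    by_cases hN : 0 < N u s r
    · have : {x : ℝ | 0 < N u s r →
          0 < (exp (Δt u • (Q + (x - Q α β) • E1)) : Matrix (Fin h) (Fin h) ℝ) s r}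
          = {x : ℝ | 0 < (exp (Δt u • (Q + (x - Q α β) • E1))
              : Matrix (Fin h) (Fin h) ℝ) s r} := by
        ext x; simp [hN]
      rw [this]
      exact isOpen_lt continuous_const (hcont u s r)
    · have : {x : ℝ | 0 < N u s r →
          0 < (exp (Δt u • (Q + (x - Q α β) • E1)) : Matrix (Fin h) (Fin h) ℝ) s r}
          = Set.univ := by
        ext x; simp [hN]
      rw [this]; exact isOpen_univ
  have haU : Q α β ∈ U := by
    intro u s r hN
    have hQ : Q + (Q α β - Q α β) • E1 = Q := by rw [sub_self, zero_smul, add_zero]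
    rw [hQ]
    exact hexp u s r hN
  -- the explicit inner derivative
  set Φ : ℝ → ℝ := fun x => ∑ u, ∑ s, ∑ r, (N u s r : ℝ) *
    ((exp (Δt u • Matrix.fromBlocks (Q + (x - Q α β) • E1) E2 0 (Q + (x - Q α β) • E1))
        : Matrix (Fin h ⊕ Fin h) (Fin h ⊕ Fin h) ℝ) (Sum.inl s) (Sum.inr r)
      / (exp (Δt u • (Q + (x - Q α β) • E1)) : Matrix (Fin h) (Fin h) ℝ) s r) with hΦ_def
  have stepA : ∀ x ∈ U, HasDerivAt (fun y : ℝ => ∑ u, ∑ s, ∑ r, (N u s r : ℝ) *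
      Real.log ((exp (Δt u • (Q + (x - Q α β) • E1 + (y - Q μ ν) • E2))
        : Matrix (Fin h) (Fin h) ℝ) s r)) (Φ x) (Q μ ν) := by
    intro x hx
    rw [hΦ_def]
    refine HasDerivAt.fun_sum fun u _ => HasDerivAt.fun_sum fun s _ => HasDerivAt.fun_sum fun r _ => ?_
    rcases Nat.eq_zero_or_pos (N u s r) with hN | hN
    · simp only [hN, Nat.cast_zero, zero_mul]
      exact hasDerivAt_const _ 0
    · have hrw : ∀ y : ℝ, Δt u • (Q + (x - Q α β) • E1 + (y - Q μ ν) • E2)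
          = Δt u • (Q + (x - Q α β) • E1) + (y - Q μ ν) • (Δt u • E2) := by
        intro y; rw [smul_add, smul_comm]
      simp only [hrw]
      have hder := hasDerivAt_exp_entry' (Δt u • (Q + (x - Q α β) • E1)) (Δt u • E2)
        s r (Q μ ν)
      have hpos : 0 < (exp (Δt u • (Q + (x - Q α β) • E1))
          : Matrix (Fin h) (Fin h) ℝ) s r := hx u s r hN
      have hne : (exp (Δt u • (Q + (x - Q α β) • E1)
          + (Q μ ν - Q μ ν) • (Δt u • E2)) : Matrix (Fin h) (Fin h) ℝ) s r ≠ 0 := by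
        rw [sub_self, zero_smul, add_zero]; exact ne_of_gt hpos
      have hlog := (hder.log hne).const_mul ((N u s r : ℝ))
      rw [sub_self, zero_smul, add_zero,
        smul_fromBlocks' (Q + (x - Q α β) • E1) E2 (Δt u)] at hlog
      exact hlog
  have hEv : (fun x : ℝ => deriv (fun y : ℝ => ∑ u, ∑ s, ∑ r, (N u s r : ℝ) *
      Real.log ((exp (Δt u • (Q + (x - Q α β) • E1 + (y - Q μ ν) • E2))
        : Matrix (Fin h) (Fin h) ℝ) s r)) (Q μ ν)) =ᶠ[nhds (Q α β)] Φ := by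
    filter_upwards [hUopen.mem_nhds haU] with x hx
    exact (stepA x hx).deriv
  rw [hEv.deriv_eq]
  -- outer derivative
  have hmain : HasDerivAt Φ (∑ u, ∑ s, ∑ r,
      ((N u s r : ℝ) / (exp (Δt u • Q) : Matrix (Fin h) (Fin h) ℝ) s r) *
      ((exp (Δt u • Matrix.fromBlocks (Matrix.fromBlocks Q E1 0 Q)
          (Matrix.fromBlocks E2 0 0 E2) 0 (Matrix.fromBlocks Q E1 0 Q))
        : Matrix ((Fin h ⊕ Fin h) ⊕ (Fin h ⊕ Fin h))
            ((Fin h ⊕ Fin h) ⊕ (Fin h ⊕ Fin h)) ℝ)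
          (Sum.inl (Sum.inl s)) (Sum.inr (Sum.inr r))
      - (exp (Δt u • Matrix.fromBlocks Q E1 0 Q)
          : Matrix (Fin h ⊕ Fin h) (Fin h ⊕ Fin h) ℝ) (Sum.inl s) (Sum.inr r)
        * (exp (Δt u • Matrix.fromBlocks Q E2 0 Q)
          : Matrix (Fin h ⊕ Fin h) (Fin h ⊕ Fin h) ℝ) (Sum.inl s) (Sum.inr r)
        / (exp (Δt u • Q) : Matrix (Fin h) (Fin h) ℝ) s r)) (Q α β) := by
    rw [hΦ_def]
    refine HasDerivAt.fun_sum fun u _ => HasDerivAt.fun_sum fun s _ => HasDerivAt.fun_sum fun r _ => ?_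
    rcases Nat.eq_zero_or_pos (N u s r) with hN | hN
    · simp only [hN, Nat.cast_zero, zero_mul, zero_div]
      exact hasDerivAt_const _ 0
    · have hF0pos : 0 < (exp (Δt u • Q) : Matrix (Fin h) (Fin h) ℝ) s r := hexp u s r hN
      have hrw1 : ∀ x : ℝ, Δt u • (Q + (x - Q α β) • E1)
          = Δt u • Q + (x - Q α β) • (Δt u • E1) := by
        intro x; rw [smul_add, smul_comm]
      have hrw2 : ∀ x : ℝ, Δt u • (Matrix.fromBlocks (Q + (x - Q α β) • E1) E2 0
            (Q + (x - Q α β) • E1))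
          = Δt u • Matrix.fromBlocks Q E2 0 Q
            + (x - Q α β) • (Δt u • Matrix.fromBlocks E1 0 0 E1) := by
        intro x
        have hbl : Matrix.fromBlocks (Q + (x - Q α β) • E1) E2 0 (Q + (x - Q α β) • E1)
            = Matrix.fromBlocks Q E2 0 Q + (x - Q α β) • Matrix.fromBlocks E1 0 0 E1 := by
          rw [Matrix.fromBlocks_smul, Matrix.fromBlocks_add]
          congr 1 <;> simp
        rw [hbl, smul_add, smul_comm]
      simp only [hrw1, hrw2]
      have hF := hasDerivAt_exp_entry' (Δt u • Q) (Δt u • E1) s r (Q α β)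
      have hG := hasDerivAt_exp_entry' (Δt u • Matrix.fromBlocks Q E2 0 Q)
        (Δt u • Matrix.fromBlocks E1 0 0 E1) (Sum.inl s) (Sum.inr r) (Q α β)
      have hFa : (exp (Δt u • Q + (Q α β - Q α β) • (Δt u • E1))
          : Matrix (Fin h) (Fin h) ℝ) s r
          = (exp (Δt u • Q) : Matrix (Fin h) (Fin h) ℝ) s r := by
        rw [sub_self, zero_smul, add_zero]
      have hFne : (exp (Δt u • Q + (Q α β - Q α β) • (Δt u • E1))
          : Matrix (Fin h) (Fin h) ℝ) s r ≠ 0 := by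
        rw [hFa]; exact ne_of_gt hF0pos
      have hdiv := (hG.div hF hFne).const_mul ((N u s r : ℝ))
      rw [sub_self, zero_smul, zero_smul, add_zero, add_zero] at hdiv
      rw [smul_fromBlocks' Q E1 (Δt u),
        smul_fromBlocks' (Matrix.fromBlocks Q E2 0 Q) (Matrix.fromBlocks E1 0 0 E1) (Δt u),
        exp_entry_swap Q E1 E2 (Δt u) s r] at hdiv
      have hFne' : (exp (Δt u • Q) : Matrix (Fin h) (Fin h) ℝ) s r ≠ 0 :=
        ne_of_gt hF0pos
      refine HasDerivAt.congr_deriv hdiv ?_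
      field_simp
  exact hmain.deriv
end
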